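/- arXiv:1806.02812 — 6 statements merged into one kernel-verified Lean document; each statement's English description precedes it below -/
import Mathlib

section
/- Let E be a real inner product space, let v, g ∈ E, let α ∈ (0,1), let γ > 0, μ > 0, and let Φ*, F ∈ ℝ. Define γ̄ = (1 − α) γ + α μ, v' = ((1 − α) γ / γ̄) · v − (α / γ̄) · g, and Φ'* = (1 − α) Φ* + α F − (α² / (2 γ̄)) ‖g‖² + (α (1 − α) γ / γ̄) ( (μ/2) ‖v‖² + ⟨g, v⟩ ). Then for every z ∈ E, (1 − α) ( Φ* + (γ/2) ‖z − v‖² ) + α ( F + ⟨g, z⟩ + (μ/2) ‖z‖² ) = Φ'* + (γ̄ / 2) ‖z − v'‖². -/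
open RealInnerProductSpace

theorem completing_the_square
    {E : Type*} [NormedAddCommGroup E] [InnerProductSpace ℝ E]
    (v g : E) (α : ℝ) (hα : α ∈ Set.Ioo (0 : ℝ) 1)
    (γ μ : ℝ) (hγ : 0 < γ) (hμ : 0 < μ) (Φstar F : ℝ)
    (γbar : ℝ) (hγbar : γbar = (1 - α) * γ + α * μ)
    (v' : E) (hv' : v' = ((1 - α) * γ / γbar) • v - (α / γbar) • g)
    (Φ'star : ℝ)
    (hΦ' : Φ'star = (1 - α) * Φstar + α * F - (α ^ 2 / (2 * γbar)) * ‖g‖ ^ 2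
        + (α * (1 - α) * γ / γbar) * ((μ / 2) * ‖v‖ ^ 2 + ⟪g, v⟫)) :
    ∀ z : E,
      (1 - α) * (Φstar + (γ / 2) * ‖z - v‖ ^ 2)
        + α * (F + ⟪g, z⟫ + (μ / 2) * ‖z‖ ^ 2)
      = Φ'star + (γbar / 2) * ‖z - v'‖ ^ 2 := by
  have hb : γbar ≠ 0 := by
    rw [hγbar]; nlinarith [hα.1, hα.2]
  intro z
  subst hv' hΦ'
  simp only [@norm_sub_sq_real, norm_smul, inner_sub_right, inner_smul_right,
    inner_smul_left, real_inner_smul_left, real_inner_smul_right, Real.norm_eq_abs,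
    mul_pow, sq_abs, real_inner_comm g z]
  simp only [conj_trivial, real_inner_comm v g]
  subst hγbar
  field_simp
  ring
end

section
/- Let μ > 0, h > 0, β > 0 with μ h < 1. Set s = √(β² + 4(1+β) μ h), α = (s − β)/2, and γ = μ · (s − β)/(s + β). Then: (i) α ∈ (0,1); (ii) γ = α² / ((1+β) h); (iii) μ − γ = β α / ((1+β) h); (iv) α² − (μ − γ) h α − γ h = 0 (equivalently α² = h((1 − α) γ + α μ)); and (v) (1 − α) γ + α μ = (1 + β) γ. -/
theorem constant_step_scheme
    (μ h β : ℝ) (hμ : 0 < μ) (hh : 0 < h) (hβ : 0 < β) (hμh : μ * h < 1)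
    (s α γ : ℝ)
    (hs : s = Real.sqrt (β ^ 2 + 4 * (1 + β) * μ * h))
    (hα : α = (s - β) / 2)
    (hγ : γ = μ * ((s - β) / (s + β))) :
    α ∈ Set.Ioo (0 : ℝ) 1 ∧
    γ = α ^ 2 / ((1 + β) * h) ∧
    μ - γ = β * α / ((1 + β) * h) ∧
    α ^ 2 - (μ - γ) * h * α - γ * h = 0 ∧
    (1 - α) * γ + α * μ = (1 + β) * γ := by
  have hS : (0:ℝ) ≤ β ^ 2 + 4 * (1 + β) * μ * h := by positivity
  have hs2 : s ^ 2 = β ^ 2 + 4 * (1 + β) * μ * h := by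
    rw [hs, Real.sq_sqrt hS]
  have hs0 : 0 ≤ s := hs ▸ Real.sqrt_nonneg _
  have hpos : 0 < 4 * (1 + β) * μ * h := by positivity
  have hsb : β < s := by nlinarith [hpos, hs2]
  have hα01 : α ∈ Set.Ioo (0:ℝ) 1 := by
    constructor
    · rw [hα]; linarith
    · rw [hα]; nlinarith
  have hne1 : (1 + β) ≠ 0 := by positivity
  have hne2 : s + β ≠ 0 := by positivity
  have hγ2 : γ = α ^ 2 / ((1 + β) * h) := by
    rw [hγ, hα]
    field_simp
    nlinarith [hs2]
  have hμγ : μ - γ = β * α / ((1 + β) * h) := by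
    rw [hγ, hα]
    field_simp
    nlinarith [hs2]
  have hne3 : (1 + β) * h ≠ 0 := by positivity
  have h1 : γ * ((1 + β) * h) = α ^ 2 := by
    rw [hγ2]; field_simp
  have h2 : (μ - γ) * ((1 + β) * h) = β * α := by
    rw [hμγ]; field_simp
  have key : α * (μ - γ) = β * γ := by
    apply mul_right_cancel₀ hne3
    calc α * (μ - γ) * ((1 + β) * h) = α * ((μ - γ) * ((1 + β) * h)) := by ring
      _ = α * (β * α) := by rw [h2]
      _ = β * α ^ 2 := by ring
      _ = β * (γ * ((1 + β) * h)) := by rw [h1]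
      _ = β * γ * ((1 + β) * h) := by ring
  refine ⟨hα01, hγ2, hμγ, ?_, ?_⟩
  · have h4 : (α ^ 2 - (μ - γ) * h * α - γ * h) * (1 + β) = 0 := by
      linear_combination (-α) * h2 - h1
    rcases mul_eq_zero.mp h4 with h | h
    · exact h
    · exact absurd h hne1
  · linear_combination key
end

section
/- Let a, b, c be nonnegative reals and A ∈ [0, π] be such that cosh a = cosh b · cosh c − sinh b · sinh c · cos A, and assume b ≤ 1/4. Let ā ≥ 0 be defined by ā² = b² + c² − 2 b c cos A. Then ā² ≤ a² ≤ (1 + 2 b²) ā². -/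
/-!
Put `t = (1 - cos A) / 2 ∈ [0, 1]`. The two laws of cosines read
`cosh a = (1 - t) cosh (b - c) + t cosh (b + c)` and `ā² = (1 - t) (b - c)² + t (b + c)²`,
so both interpolate between the degenerate triangles `A = 0` and `A = π`.
As `s ↦ cosh √s` is convex, Jensen's inequality gives `cosh ā ≤ cosh a`.
For the upper bound put `K = √(1 + 2b²)`: `t ↦ cosh (K ā)` is convex and `t ↦ cosh a` is affine,
so it suffices to dominate `cosh a` by the tangent of `cosh (K ā)` at `t = 0`. Both being affine
in `t`, this is checked at `t = 0`, where it says `cosh |b - c| ≤ cosh (K |b - c|)`, and at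
`t = 1`, where it is a sharp estimate for the degenerate triangle that needs `b ≤ 1/4`.
-/

open Real Set

lemma le_of_hasDerivAt_nonneg {f f' : ℝ → ℝ} {x y : ℝ} (hf : ∀ t, HasDerivAt f (f' t) t)
    (hf' : ∀ t ∈ Ioo x y, 0 ≤ f' t) (hxy : x ≤ y) : f x ≤ f y :=
  monotoneOn_of_hasDerivWithinAt_nonneg (convex_Icc x y)
    (fun t _ ↦ (hf t).continuousAt.continuousWithinAt) (fun t _ ↦ (hf t).hasDerivWithinAt)
    (by simpa only [interior_Icc] using hf') (left_mem_Icc.2 hxy) (right_mem_Icc.2 hxy) hxy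

namespace Real

lemma sinh_le_mul_cosh {x : ℝ} (hx : 0 ≤ x) : sinh x ≤ x * cosh x := by
  have key := le_of_hasDerivAt_nonneg (f := fun t ↦ t * cosh t - sinh t)
    (fun t ↦ ((hasDerivAt_id' t).mul (hasDerivAt_cosh t)).sub (hasDerivAt_sinh t))
    (fun t ht ↦ by nlinarith [mul_pos ht.1 (sinh_pos_iff.2 ht.1)]) hx
  simpa using key

lemma mul_sinh_le_mul_sinh {x y : ℝ} (hx : 0 ≤ x) (hxy : x ≤ y) :
    y * sinh x ≤ x * sinh y := by
  have key := le_of_hasDerivAt_nonneg (f := fun t ↦ x * sinh t - t * sinh x)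
    (fun t ↦ ((hasDerivAt_sinh t).const_mul x).sub ((hasDerivAt_id' t).mul_const (sinh x)))
    (fun t ht ↦ by
      have : cosh x ≤ cosh t :=
        cosh_le_cosh.2 (by rw [abs_of_nonneg hx, abs_of_nonneg (hx.trans ht.1.le)]; exact ht.1.le)
      nlinarith [sinh_le_mul_cosh hx]) hxy
  simpa using key

lemma mul_cosh_le {x : ℝ} (hx : 0 ≤ x) : x * cosh x ≤ (1 + x ^ 2 / 3) * sinh x := by
  have key := le_of_hasDerivAt_nonneg (f := fun t ↦ (1 + t ^ 2 / 3) * sinh t - t * cosh t)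
    (fun t ↦ ((((hasDerivAt_pow 2 t).div_const 3).const_add 1).mul (hasDerivAt_sinh t)).sub
      ((hasDerivAt_id' t).mul (hasDerivAt_cosh t)))
    (fun t ht ↦ by nlinarith [sinh_le_mul_cosh ht.1.le, ht.1]) hx
  simpa using key

lemma sinh_le_add_cube {x : ℝ} (hx : 0 ≤ x) (hx1 : x ≤ 1) : sinh x ≤ x + 2 / 9 * x ^ 3 := by
  have hexp (y : ℝ) (hy : |y| ≤ 1) : |exp y - (1 + y + y ^ 2 / 2)| ≤ |y| ^ 3 * (2 / 9) := by
    convert exp_bound hy (n := 3) (by norm_num) using 2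
    · simp [Finset.sum_range_succ]
    · norm_num [Nat.factorial]
  have hpos := (abs_le.1 (hexp x (by rwa [abs_of_nonneg hx]))).2
  have hneg := (abs_le.1 (hexp (-x) (by rwa [abs_neg, abs_of_nonneg hx]))).1
  rw [abs_neg, abs_of_nonneg hx] at hneg
  rw [abs_of_nonneg hx] at hpos
  rw [sinh_eq]
  nlinarith

lemma sq_sinh_le {x : ℝ} (hx : 0 ≤ x) (hx1 : x ≤ 1) :
    sinh x ^ 2 ≤ (1 + 2 * x ^ 2) * x ^ 2 := by
  have := pow_le_pow_left₀ (sinh_nonneg_iff.2 hx) (sinh_le_add_cube hx hx1) 2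
  nlinarith [pow_le_pow_left₀ hx hx1 2, pow_nonneg hx 4]

lemma one_add_sq_div_two_le_cosh (x : ℝ) : 1 + x ^ 2 / 2 ≤ cosh x := by
  have hsq : (x / 2) ^ 2 ≤ sinh (x / 2) ^ 2 :=
    sq_le_sq.2 (by rw [abs_sinh]; exact self_le_sinh_iff.2 (abs_nonneg _))
  have hcosh : cosh x = 1 + 2 * sinh (x / 2) ^ 2 := by
    have := cosh_two_mul (x / 2)
    rw [mul_div_cancel₀ x two_ne_zero, cosh_sq] at this
    linarith
  nlinarith

/-- The tangent line of the convex function `s ↦ cosh √s` at `s = y₀²`, multiplied by `2 y₀`. -/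
lemma two_mul_cosh_add_sq_sub_sq_mul_sinh_le {y₀ : ℝ} (hy₀ : 0 ≤ y₀) (y : ℝ) :
    2 * y₀ * cosh y₀ + (y ^ 2 - y₀ ^ 2) * sinh y₀ ≤ 2 * y₀ * cosh y := by
  rw [← cosh_abs y, ← sq_abs y]
  have hf : ∀ s, HasDerivAt (fun s ↦ 2 * y₀ * cosh s - s ^ 2 * sinh y₀)
      (2 * (y₀ * sinh s - s * sinh y₀)) s := fun s ↦
    (((hasDerivAt_cosh s).const_mul (2 * y₀)).sub
      ((hasDerivAt_pow 2 s).mul_const (sinh y₀))).congr_deriv (by push_cast; ring)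
  suffices
      2 * y₀ * cosh y₀ - y₀ ^ 2 * sinh y₀ ≤ 2 * y₀ * cosh |y| - |y| ^ 2 * sinh y₀ by linarith
  rcases le_total y₀ |y| with h | h
  · refine le_of_hasDerivAt_nonneg hf (fun s hs ↦ ?_) h
    nlinarith [mul_sinh_le_mul_sinh hy₀ hs.1.le]
  · have key := le_of_hasDerivAt_nonneg (fun s ↦ (hf s).neg) (fun s hs ↦ ?_) h
    · simp only [Pi.neg_apply] at key
      linarith
    nlinarith [mul_sinh_le_mul_sinh ((abs_nonneg y).trans hs.1.le) hs.2.le]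

lemma cosh_le_convex_comb_of_sq_eq {x y z t : ℝ} (ht₀ : 0 ≤ t) (ht₁ : t ≤ 1)
    (hz : z ^ 2 = (1 - t) * x ^ 2 + t * y ^ 2) :
    cosh z ≤ (1 - t) * cosh x + t * cosh y := by
  rw [← cosh_abs z]
  rcases (abs_nonneg z).eq_or_lt with h | h
  · rw [← h, cosh_zero]
    nlinarith [one_le_cosh x, one_le_cosh y]
  · have hx := two_mul_cosh_add_sq_sub_sq_mul_sinh_le (abs_nonneg z) x
    have hy := two_mul_cosh_add_sq_sub_sq_mul_sinh_le (abs_nonneg z) y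
    rw [sq_abs] at hx hy
    have := add_le_add (mul_le_mul_of_nonneg_left hx (sub_nonneg.2 ht₁))
      (mul_le_mul_of_nonneg_left hy ht₀)
    have hcomb : ((1 - t) * x ^ 2 + t * y ^ 2 - z ^ 2) * sinh |z| = 0 := by rw [hz]; ring
    refine le_of_mul_le_mul_left ?_ (mul_pos two_pos h)
    linarith

lemma mul_sinh_mul_cosh_add_mul_sinh_sq_le {m n K β : ℝ} (hm : 0 ≤ m) (hmn : m ≤ n) (hK : 0 ≤ K)
    (hmK : 1 + 2 * m ^ 2 ≤ K ^ 2) (hK98 : K ^ 2 ≤ 9 / 8)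
    (hβ : β = m - (K - 1) * (n - m) / 2) (hβ₀ : 0 ≤ β) :
    K * (n - m) * (sinh β * cosh β) + (1 + K ^ 2 * (n - m) ^ 2 / 3) * sinh β ^ 2
      ≤ K ^ 2 * m * n := by
  have hm4 : m ≤ 1 / 4 := by nlinarith
  have hK1 : 1 ≤ K := by nlinarith
  have hK17 : K ≤ 17 / 16 := by nlinarith
  have hKm : 32 / 33 * m ^ 2 ≤ K - 1 := by nlinarith
  have hβm : β ≤ m := by rw [hβ]; nlinarith
  have hsq : sinh β ^ 2 ≤ K ^ 2 * m ^ 2 := by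
    have := pow_le_pow_left₀ (sinh_nonneg_iff.2 hβ₀) (sinh_le_sinh.2 hβm) 2
    nlinarith [sq_sinh_le hm (by linarith)]
  have hsc : sinh β * cosh β ≤ K * m - (K - 1) * (n - m) / 2 := by
    have h2 := sinh_le_add_cube (x := 2 * β) (by positivity) (by linarith)
    rw [sinh_two_mul] at h2
    have hβ3 : β ^ 3 ≤ m ^ 3 := pow_le_pow_left₀ hβ₀ hβm 3
    nlinarith
  have hD : 0 ≤ n - m := sub_nonneg.2 hmn
  have hcube : K ^ 3 * m ^ 2 ≤ 3 / 2 * (K - 1) := by nlinarith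
  calc K * (n - m) * (sinh β * cosh β) + (1 + K ^ 2 * (n - m) ^ 2 / 3) * sinh β ^ 2
      ≤ K * (n - m) * (K * m - (K - 1) * (n - m) / 2)
          + (1 + K ^ 2 * (n - m) ^ 2 / 3) * (K ^ 2 * m ^ 2) := by gcongr
    _ ≤ K ^ 2 * m * n := by
      nlinarith [mul_nonneg (mul_nonneg hK (sq_nonneg (n - m))) (sub_nonneg.2 hcube)]

/-- With `β = m - (K - 1)(n - m)/2` and `γ = K(n - m) + β` we have `m + n = γ + β` and
`K(n - m) = γ - β`, so the excess `cosh (m + n) - cosh (K(n - m)) = 2 sinh γ sinh β` is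
nonpositive when `β ≤ 0`; when `β > 0` it is bounded via `x cosh x ≤ (1 + x²/3) sinh x`. -/
lemma mul_cosh_add_le {m n K : ℝ} (hm : 0 ≤ m) (hmn : m ≤ n) (hK : 0 ≤ K)
    (hmK : 1 + 2 * m ^ 2 ≤ K ^ 2) (hK98 : K ^ 2 ≤ 9 / 8) :
    (n - m) * cosh (m + n)
      ≤ (n - m) * cosh (K * (n - m)) + 2 * K * (m * n) * sinh (K * (n - m)) := by
  set D := n - m
  set β := m - (K - 1) * D / 2 with hβ
  set γ := K * D + β
  have hD₀ : 0 ≤ D := sub_nonneg.2 hmn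
  have hK1 : 1 ≤ K := by nlinarith
  have hsinhKD : 0 ≤ sinh (K * D) := sinh_nonneg_iff.2 (by positivity)
  have hsplit : cosh (m + n) - cosh (K * D) = 2 * sinh γ * sinh β := by
    rw [show m + n = γ + β by ring, show K * D = γ - β by ring, cosh_add, cosh_sub γ β]
    ring
  suffices h : D * (sinh γ * sinh β) ≤ K * (m * n) * sinh (K * D) by
    linear_combination D * hsplit + 2 * h
  rcases le_total β 0 with hβ₀ | hβ₀
  · have hγ : 0 ≤ sinh γ := sinh_nonneg_iff.2 (by nlinarith)
    have hmn₀ : 0 ≤ m * n := mul_nonneg hm (hm.trans hmn)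
    nlinarith [mul_nonneg hD₀ (mul_nonneg hγ (neg_nonneg.2 (sinh_nonpos_iff.2 hβ₀))),
      mul_nonneg (mul_nonneg hK hmn₀) hsinhKD]
  · have hγ : sinh γ = sinh (K * D) * cosh β + cosh (K * D) * sinh β := sinh_add _ _
    have hcoth := mul_cosh_le (mul_nonneg hK hD₀)
    have hest := mul_sinh_mul_cosh_add_mul_sinh_sq_le hm hmn hK hmK hK98 hβ hβ₀
    refine le_of_mul_le_mul_left ?_ (by linarith : (0 : ℝ) < K)
    calc K * (D * (sinh γ * sinh β))
        = sinh (K * D) * (K * D * (sinh β * cosh β)) + K * D * cosh (K * D) * sinh β ^ 2 := by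
          rw [hγ]; ring
      _ ≤ sinh (K * D) * (K * D * (sinh β * cosh β))
          + (1 + (K * D) ^ 2 / 3) * sinh (K * D) * sinh β ^ 2 := by gcongr
      _ ≤ sinh (K * D) * (K ^ 2 * m * n) := by nlinarith
      _ = K * (K * (m * n) * sinh (K * D)) := by ring

lemma convex_comb_cosh_le_cosh_mul {b c t K z : ℝ} (hb : 0 ≤ b) (hc : 0 ≤ c)
    (ht₀ : 0 ≤ t) (ht₁ : t ≤ 1) (hK : 0 ≤ K) (hmK : 1 + 2 * min b c ^ 2 ≤ K ^ 2)
    (hK98 : K ^ 2 ≤ 9 / 8) (hz : z ^ 2 = (1 - t) * (b - c) ^ 2 + t * (b + c) ^ 2) :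
    (1 - t) * cosh (b - c) + t * cosh (b + c) ≤ cosh (K * z) := by
  wlog hbc : b ≤ c generalizing b c
  · have := this hc hb (by rwa [min_comm]) (by rw [hz]; ring) (le_of_not_ge hbc)
    rwa [add_comm c, ← cosh_neg, neg_sub] at this
  rw [min_eq_left hbc] at hmK
  have hK1 : 1 ≤ K := by nlinarith
  rcases hbc.eq_or_lt with rfl | hlt
  · have hsinh : sinh b ^ 2 ≤ K ^ 2 * b ^ 2 := by nlinarith [sq_sinh_le hb (by nlinarith)]
    have hcosh : cosh (b + b) = 1 + 2 * sinh b ^ 2 := by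
      rw [← two_mul, cosh_two_mul, cosh_sq]; ring
    have hKz : (K * z) ^ 2 = 4 * t * (K ^ 2 * b ^ 2) := by rw [mul_pow, hz]; ring
    rw [sub_self, cosh_zero, hcosh]
    nlinarith [one_add_sq_div_two_le_cosh (K * z), mul_le_mul_of_nonneg_left hsinh ht₀]
  · set D := c - b
    have hD : 0 < D := sub_pos.2 hlt
    have htan := two_mul_cosh_add_sq_sub_sq_mul_sinh_le (mul_nonneg hK hD.le) (K * z)
    have hKz : (K * z) ^ 2 - (K * D) ^ 2 = 4 * K ^ 2 * (b * c) * t := by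
      rw [mul_pow, mul_pow, hz]; ring
    rw [hKz] at htan
    have htan' : D * cosh (K * D) + t * (2 * K * (b * c) * sinh (K * D)) ≤ D * cosh (K * z) := by
      refine le_of_mul_le_mul_left ?_ (by positivity : (0 : ℝ) < 2 * K)
      linarith
    have hdeg := mul_cosh_add_le hb hbc hK hmK hK98
    have hDKD : cosh D ≤ cosh (K * D) :=
      cosh_le_cosh.2 (by rw [abs_of_pos hD, abs_of_pos (by positivity)]; nlinarith)
    rw [← cosh_neg, neg_sub]
    refine le_of_mul_le_mul_left ?_ hD
    nlinarith [mul_le_mul_of_nonneg_left hDKD (mul_nonneg (sub_nonneg.2 ht₁) hD.le),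
      mul_le_mul_of_nonneg_left hdeg ht₀]

end Real

theorem hyperbolic_distortion_general
    (a b c A : ℝ) (hb : 0 ≤ b) (hc : 0 ≤ c)
    (hlaw : Real.cosh a = Real.cosh b * Real.cosh c
        - Real.sinh b * Real.sinh c * Real.cos A)
    (hb4 : b ≤ 1 / 4)
    (abar : ℝ)
    (habar2 : abar ^ 2 = b ^ 2 + c ^ 2 - 2 * b * c * Real.cos A) :
    abar ^ 2 ≤ a ^ 2 ∧ a ^ 2 ≤ (1 + 2 * b ^ 2) * abar ^ 2 := by
  set t := (1 - cos A) / 2 with ht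
  have ht₀ : 0 ≤ t := by linarith [cos_le_one A]
  have ht₁ : t ≤ 1 := by linarith [neg_one_le_cos A]
  have hcosh : cosh a = (1 - t) * cosh (b - c) + t * cosh (b + c) := by
    rw [hlaw, cosh_sub, cosh_add, ht]; ring
  have habar : abar ^ 2 = (1 - t) * (b - c) ^ 2 + t * (b + c) ^ 2 := by
    rw [habar2, ht]; ring
  set K := √(1 + 2 * b ^ 2)
  have hK : K ^ 2 = 1 + 2 * b ^ 2 := sq_sqrt (by positivity)
  have hlower : cosh abar ≤ cosh a := hcosh ▸ cosh_le_convex_comb_of_sq_eq ht₀ ht₁ habar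
  have hupper : cosh a ≤ cosh (K * abar) :=
    hcosh ▸ convex_comb_cosh_le_cosh_mul hb hc ht₀ ht₁ (sqrt_nonneg _)
      (by rw [hK]; nlinarith [min_le_left b c, le_min hb hc]) (by rw [hK]; nlinarith) habar
  constructor
  · exact sq_le_sq.2 (cosh_le_cosh.1 hlower)
  · rw [← hK, ← mul_pow]
    exact sq_le_sq.2 (cosh_le_cosh.1 hupper)

theorem hyperbolic_distortion
    (a b c A : ℝ) (ha : 0 ≤ a) (hb : 0 ≤ b) (hc : 0 ≤ c)
    (hA : A ∈ Set.Icc (0 : ℝ) Real.pi)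
    (hlaw : Real.cosh a = Real.cosh b * Real.cosh c
        - Real.sinh b * Real.sinh c * Real.cos A)
    (hb4 : b ≤ 1 / 4)
    (abar : ℝ) (habar : 0 ≤ abar)
    (habar2 : abar ^ 2 = b ^ 2 + c ^ 2 - 2 * b * c * Real.cos A) :
    abar ^ 2 ≤ a ^ 2 ∧ a ^ 2 ≤ (1 + 2 * b ^ 2) * abar ^ 2 :=
  hyperbolic_distortion_general a b c A hb hc hlaw hb4 abar habar2
end

section
/- Let a, b, c be nonnegative reals and A ∈ [0, π] be such that cosh a = cosh b · cosh c − sinh b · sinh c · cos A, and assume b ≤ 1/4 and c ≤ 1/2. Let ā ≥ 0 be defined by ā² = b² + c² − 2 b c cos A. Then a² ≤ (1 + b²) ā². -/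
/-!
Put `l = (1 - cos A) / 2`. The hyperbolic law of cosines reads
`cosh a = l cosh (b + c) + (1 - l) cosh (b - c)`, while `ā² = l (b + c)² + (1 - l) (b - c)²`.
On `[0, 1]` the function `t ↦ cosh √t` has second derivative at most `1/4`, so by Jensen's
inequality for the convex function `t²/8 - cosh √t`, `cosh a - cosh ā` is at most the Jensen gap
of `t²/8`, namely `2 l (1 - l) b² c² = (b²/2) c² sin² A ≤ (b²/2) ā²`. Finally
`cosh ā + (b²/2) ā sinh ā ≤ cosh (√(1 + b²) ā)`, hence `a ≤ √(1 + b²) ā`.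
-/

open Real Set

namespace Real

lemma mul_cosh_sub_sinh_le_pow_three {x : ℝ} (hx0 : 0 ≤ x) (hx1 : x ≤ 1) :
    x * cosh x - sinh x ≤ x ^ 3 := by
  have hg : ∀ u, HasDerivAt (fun u => u ^ 3 - u * cosh u + sinh u) (u * (3 * u - sinh u)) u :=
    fun u => (((hasDerivAt_pow 3 u).sub ((hasDerivAt_id' u).mul (hasDerivAt_cosh u))).add
      (hasDerivAt_sinh u)).congr_deriv (by push_cast; ring)
  have hmono : MonotoneOn (fun u => u ^ 3 - u * cosh u + sinh u) (Icc 0 1) := by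
    refine monotoneOn_of_deriv_nonneg (convex_Icc 0 1)
      (fun u _ => (hg u).continuousAt.continuousWithinAt)
      (fun u _ => (hg u).differentiableAt.differentiableWithinAt) fun u hu => ?_
    rw [interior_Icc] at hu
    have hcosh : cosh u ≤ 3 := calc
      cosh u ≤ exp (u ^ 2 / 2) := cosh_le_exp_half_sq u
      _ ≤ exp 1 := exp_le_exp.mpr (by nlinarith [hu.1, hu.2])
      _ ≤ 3 := exp_one_lt_three.le
    rw [(hg u).deriv]
    refine mul_nonneg hu.1.le ?_
    nlinarith [sinh_le_mul_cosh hu.1.le, hu.1]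
  have := hmono ⟨le_rfl, zero_le_one⟩ ⟨hx0, hx1⟩ hx0
  simp only [cosh_zero, sinh_zero] at this
  linarith

lemma convexOn_sq_div_eight_sub_cosh_sqrt :
    ConvexOn ℝ (Icc 0 1) (fun t => t ^ 2 / 8 - cosh √t) := by
  refine convexOn_of_hasDerivWithinAt2_nonneg (convex_Icc 0 1)
    (f' := fun t => t / 4 - sinh √t / (2 * √t))
    (f'' := fun t => 1 / 4 - (√t * cosh √t - sinh √t) / (4 * √t ^ 3))
    (by fun_prop) ?_ ?_ ?_ <;> rw [interior_Icc] <;> intro t ⟨ht0, ht1⟩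
  · have hsqrt := hasDerivAt_sqrt ht0.ne'
    refine HasDerivAt.hasDerivWithinAt ?_
    exact (((hasDerivAt_pow 2 t).div_const 8).sub hsqrt.cosh).congr_deriv (by field_simp; ring)
  · have hsqrt := hasDerivAt_sqrt ht0.ne'
    have hpos : 0 < √t := sqrt_pos.mpr ht0
    refine HasDerivAt.hasDerivWithinAt ?_
    exact (((hasDerivAt_id' t).div_const 4).sub (hsqrt.sinh.div (hsqrt.const_mul 2)
      (by positivity))).congr_deriv (by field_simp; ring)
  · have hpos : 0 < √t := sqrt_pos.mpr ht0
    rw [sub_nonneg, div_le_iff₀ (by positivity)]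
    linarith [mul_cosh_sub_sinh_le_pow_three hpos.le (sqrt_le_one.mpr ht1.le)]

lemma mul_cosh_add_one_sub_mul_cosh_le {u v l : ℝ} (hu : u ^ 2 ≤ 1) (hv : v ^ 2 ≤ 1)
    (hl0 : 0 ≤ l) (hl1 : l ≤ 1) :
    l * cosh u + (1 - l) * cosh v ≤
      cosh √(l * u ^ 2 + (1 - l) * v ^ 2) + l * (1 - l) * (u ^ 2 - v ^ 2) ^ 2 / 8 := by
  have hjensen := convexOn_sq_div_eight_sub_cosh_sqrt.2 ⟨sq_nonneg u, hu⟩ ⟨sq_nonneg v, hv⟩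
    hl0 (sub_nonneg.mpr hl1) (add_sub_cancel l 1)
  simp only [smul_eq_mul, sqrt_sq_eq_abs, cosh_abs] at hjensen
  linear_combination hjensen

lemma cosh_add_mul_sinh_le_cosh_mul {s k : ℝ} (hs : 0 ≤ s) (hk : 1 ≤ k) :
    cosh s + (k ^ 2 - 1) / 2 * (s * sinh s) ≤ cosh (k * s) := by
  set d := (k - 1) * s
  have hd : 0 ≤ d := mul_nonneg (sub_nonneg.mpr hk) hs
  have hsinh_s := mul_le_mul_of_nonneg_left (sinh_le_mul_cosh hs)
    (by positivity : 0 ≤ (k - 1) ^ 2 * s / 2)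
  calc cosh s + (k ^ 2 - 1) / 2 * (s * sinh s)
      ≤ cosh s * (1 + d ^ 2 / 2) + d * sinh s := by linear_combination hsinh_s
    _ ≤ cosh s * cosh d + sinh d * sinh s := by
      have := sinh_nonneg_iff.mpr hs
      gcongr
      exacts [one_add_sq_div_two_le_cosh d, self_le_sinh_iff.mpr hd]
    _ = cosh (k * s) := by rw [show k * s = s + d by ring, cosh_add, mul_comm (sinh d)]

end Real

theorem hyperbolic_distortion_small_c_general
    (a b c A : ℝ) (hb : 0 ≤ b) (hc : 0 ≤ c)
    (hlaw : Real.cosh a = Real.cosh b * Real.cosh c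
        - Real.sinh b * Real.sinh c * Real.cos A)
    (hb4 : b ≤ 1 / 4) (hc2 : c ≤ 1 / 2)
    (abar : ℝ) (habar : 0 ≤ abar)
    (habar2 : abar ^ 2 = b ^ 2 + c ^ 2 - 2 * b * c * Real.cos A) :
    a ^ 2 ≤ (1 + b ^ 2) * abar ^ 2 := by
  set l := (1 - cos A) / 2 with hl
  have hcosh_a : cosh a = l * cosh (b + c) + (1 - l) * cosh (b - c) := by
    rw [hlaw, cosh_add, cosh_sub]; ring
  have habar_sq : abar ^ 2 = l * (b + c) ^ 2 + (1 - l) * (b - c) ^ 2 := by rw [habar2]; ring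
  have hgap := mul_cosh_add_one_sub_mul_cosh_le (u := b + c) (v := b - c) (l := l)
    (by nlinarith) (by nlinarith) (by linarith [hl, cos_le_one A])
    (by linarith [hl, neg_one_le_cos A])
  rw [← habar_sq, sqrt_sq habar, ← hcosh_a] at hgap
  have hheight : c ^ 2 * sin A ^ 2 ≤ abar ^ 2 := by
    nlinarith [sq_nonneg (b - c * cos A), sin_sq_add_cos_sq A]
  set k := √(1 + b ^ 2)
  have hk : k ^ 2 = 1 + b ^ 2 := sq_sqrt (by positivity)
  have hcosh_le : cosh a ≤ cosh (k * abar) := calc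
    cosh a ≤ cosh abar + l * (1 - l) * ((b + c) ^ 2 - (b - c) ^ 2) ^ 2 / 8 := hgap
    _ = cosh abar + b ^ 2 / 2 * (c ^ 2 * sin A ^ 2) := by rw [sin_sq]; ring
    _ ≤ cosh abar + (k ^ 2 - 1) / 2 * (abar * sinh abar) := by
      rw [hk, add_sub_cancel_left]
      gcongr cosh abar + _ * ?_
      exact hheight.trans (by rw [sq]; gcongr; exact self_le_sinh_iff.mpr habar)
    _ ≤ cosh (k * abar) :=
      cosh_add_mul_sinh_le_cosh_mul habar (one_le_sqrt.mpr (le_add_of_nonneg_right (sq_nonneg b)))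
  calc a ^ 2 ≤ (k * abar) ^ 2 := sq_le_sq.mpr (cosh_le_cosh.mp hcosh_le)
    _ = (1 + b ^ 2) * abar ^ 2 := by rw [mul_pow, hk]

theorem hyperbolic_distortion_small_c
    (a b c A : ℝ) (ha : 0 ≤ a) (hb : 0 ≤ b) (hc : 0 ≤ c)
    (hA : A ∈ Set.Icc (0 : ℝ) Real.pi)
    (hlaw : Real.cosh a = Real.cosh b * Real.cosh c
        - Real.sinh b * Real.sinh c * Real.cos A)
    (hb4 : b ≤ 1 / 4) (hc2 : c ≤ 1 / 2)
    (abar : ℝ) (habar : 0 ≤ abar)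
    (habar2 : abar ^ 2 = b ^ 2 + c ^ 2 - 2 * b * c * Real.cos A) :
    a ^ 2 ≤ (1 + b ^ 2) * abar ^ 2 :=
  hyperbolic_distortion_small_c_general a b c A hb hc hlaw hb4 hc2 abar habar habar2
end

section
/- For all natural numbers p and q with p ≥ q, (2p + 2q)! / ((2p)! · (2q)!) = ∑_{k=0}^{q} ( (p+q)! / ((p−k)! · (q−k)! · (2k)!) ) · 2^{2k}. Equivalently, the binomial coefficient C(2p+2q, 2q) equals the sum over k = 0, …, q of the multinomial coefficient (p+q choose p−k, q−k, 2k) times 4^k. -/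
/-!
Both sides count the coefficient of `X ^ (2q)` in `(1 + X) ^ (2(p+q)) = (1 + X (X + 2)) ^ (p+q)`.
Expanding the right-hand form by the binomial theorem, the term `(X (X + 2)) ^ j` contributes
`C(p+q, j) C(j, 2q - j) 2 ^ (2j - 2q)`; it vanishes unless `j = q + k` with `k ≤ q`, and then
`C(p+q, q+k) C(q+k, q-k)` is the multinomial coefficient `(p+q choose p-k, q-k, 2k)`.
-/

open Nat Finset

section

open Polynomial

theorem coeff_X_mul_X_add_C_pow {R : Type*} [CommSemiring R] (a : R) (j m : ℕ) :
    ((X * (X + C a)) ^ j).coeff m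
      = if j ≤ m then a ^ (2 * j - m) * (j.choose (m - j) : R) else 0 := by
  rw [mul_pow, coeff_X_pow_mul', coeff_X_add_C_pow]
  split_ifs with h
  · rw [show j - (m - j) = 2 * j - m by omega]
  · rfl

theorem Nat.choose_two_mul_eq_sum (n m : ℕ) :
    (2 * n).choose m
      = ∑ j ∈ range (m + 1), n.choose j * j.choose (m - j) * 2 ^ (2 * j - m) := by
  have hsq : (X + 1 : ℕ[X]) ^ (2 * n) = (X * (X + C 2) + 1) ^ n := by
    rw [pow_mul, C_ofNat]; ring
  have hcoeff := coeff_X_add_one_pow ℕ (2 * n) m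
  rw [hsq, add_pow, finsetSum_coeff] at hcoeff
  simp only [one_pow, mul_one, coeff_mul_natCast, coeff_X_mul_X_add_C_pow] at hcoeff
  let f j := (if j ≤ m then 2 ^ (2 * j - m) * j.choose (m - j) else 0) * n.choose j
  calc (2 * n).choose m = ∑ j ∈ range (n + 1), f j := hcoeff.symm
    _ = ∑ j ∈ range (n + m + 1), f j :=
        (eventually_constant_sum
          (fun j hj => by simp [f, choose_eq_zero_of_lt (by omega : n < j)]) (by omega)).symm
    _ = ∑ j ∈ range (m + 1), f j :=
        eventually_constant_sum (fun j hj => by simp [f, show ¬ j ≤ m by omega]) (by omega)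
    _ = _ := sum_congr rfl fun j hj => by
        simp only [f, if_pos (mem_range_succ_iff.mp hj)]; ring

end

theorem Nat.choose_two_mul_two_mul_eq_sum (n q : ℕ) :
    (2 * n).choose (2 * q)
      = ∑ k ∈ range (q + 1), n.choose (q + k) * (q + k).choose (q - k) * 2 ^ (2 * k) := by
  rw [choose_two_mul_eq_sum, show 2 * q + 1 = q + (q + 1) by omega, sum_range_add,
    sum_eq_zero fun j hj => ?_, zero_add]
  · refine sum_congr rfl fun k hk => ?_
    rw [show 2 * q - (q + k) = q - k by omega, show 2 * (q + k) - 2 * q = 2 * k by omega]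
  · rw [choose_eq_zero_of_lt (by simp at hj; omega : j < 2 * q - j), mul_zero, zero_mul]

theorem Nat.cast_add_add_factorial_div_eq_choose_mul_choose {K : Type*} [Field K] [CharZero K]
    (a b c : ℕ) :
    ((a + b + c)! : K) / (a ! * b ! * c !) = (a + b + c).choose (b + c) * (b + c).choose b := by
  rw [cast_add_choose, show a + b + c = b + c + a by omega, cast_add_choose]
  have : ((b + c)! : K) ≠ 0 := cast_ne_zero.mpr (factorial_ne_zero _)
  field_simp

theorem multinomial_identity_even (p q : ℕ) (hpq : q ≤ p) :
    ((2 * p + 2 * q)! : ℚ) / ((2 * p)! * (2 * q)!)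
      = ∑ k ∈ Finset.range (q + 1),
          ((p + q)! : ℚ) / ((p - k)! * (q - k)! * (2 * k)!) * 2 ^ (2 * k) := by
  rw [← cast_add_choose, choose_symm_add, show 2 * p + 2 * q = 2 * (p + q) by ring,
    choose_two_mul_two_mul_eq_sum]
  push_cast
  refine sum_congr rfl fun k hk => ?_
  have hk : k ≤ q := mem_range_succ_iff.mp hk
  rw [show p + q = p - k + (q - k) + 2 * k by omega,
    cast_add_add_factorial_div_eq_choose_mul_choose, show q - k + 2 * k = q + k by omega]
end

section
/- Let K > 0, let b ∈ [0, 1/(4√K)], c ∈ [0, π/(2√K)], A ∈ [0, π], and let a ∈ [0, π/√K] be such that cos(√K · a) = cos(√K · b) · cos(√K · c) + sin(√K · b) · sin(√K · c) · cos A. Let ā ≥ 0 be defined by ā² = b² + c² − 2 b c cos A. Then a² ≤ ā² ≤ (1 + 2 K b²) a². -/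
/-!
Put `G y = arcsin (√y) ^ 2`, so that `G (sin θ ^ 2) = θ ^ 2` for `|θ| ≤ π / 2`. For a triangle with
sides `t, u, s` on the unit sphere and `w = cos A`, the spherical law of cosines says that
`sin (s / 2) ^ 2` is the convex combination `λ₀ Y₀ + λ₁ Y₁` of `Y₀ = sin ((u - t) / 2) ^ 2` and
`Y₁ = sin ((u + t) / 2) ^ 2` with weights `λ₀ = (1 + w) / 2`, `λ₁ = (1 - w) / 2`, whereas the
Euclidean comparison side satisfies `ā ^ 2 / 4 = λ₀ G Y₀ + λ₁ G Y₁`. Since `G' (sin θ ^ 2) =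
2θ / sin 2θ` is increasing, `G` is convex and Jensen gives `s ^ 2 ≤ ā ^ 2`.

For the upper bound, `sin x - x cos x ≤ 2 sin x ^ 3` for `x ≤ π / 2 + 1 / 4` says `G'' ≤ 4` on the
range of `Y₀, Y₁`, so `2 y ^ 2 - G y` is convex as well. Jensen for it bounds the gap
`ā ^ 2 / 4 - s ^ 2 / 4` by `2 λ₀ λ₁ (Y₁ - Y₀) ^ 2 = 2 λ₀ λ₁ (sin t sin u) ^ 2`, and an elementary
estimate bounds this by `2 t ^ 2 sin (s / 2) ^ 2 ≤ t ^ 2 s ^ 2 / 2`. Rescaling by `√K` gives the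
theorem.
-/

open Real Set

namespace Real

theorem mul_cos_le_sin {x : ℝ} (h0 : 0 ≤ x) (hπ : x ≤ π) : x * cos x ≤ sin x := by
  rcases lt_or_ge x (π / 2) with hx | hx
  · have hcos : 0 < cos x := cos_pos_of_mem_Ioo ⟨by linarith, hx⟩
    have := le_tan h0 hx
    rwa [tan_eq_sin_div_cos, le_div_iff₀ hcos] at this
  · have hcos : cos x ≤ 0 := cos_nonpos_of_pi_div_two_le_of_le hx (by linarith)
    nlinarith [sin_nonneg_of_nonneg_of_le_pi h0 hπ]

theorem sin_sub_mul_cos_le {x : ℝ} (hx : 0 ≤ x) : sin x - x * cos x ≤ x ^ 3 / 3 := by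
  let f : ℝ → ℝ := fun y => y ^ 3 / 3 - (sin y - y * cos y)
  have hf : ∀ y, HasDerivAt f (y * (y - sin y)) y := fun y =>
    (((hasDerivAt_pow 3 y).div_const 3).sub
      ((hasDerivAt_sin y).sub ((hasDerivAt_id y).mul (hasDerivAt_cos y)))).congr_deriv
      (by simp only [id]; ring)
  have hmono : MonotoneOn f (Ici 0) :=
    monotoneOn_of_hasDerivWithinAt_nonneg (convex_Ici 0)
      (fun y _ => (hf y).continuousAt.continuousWithinAt)
      (fun y _ => (hf y).hasDerivWithinAt)
      (fun y hy => by
        rw [interior_Ici] at hy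
        exact mul_nonneg (le_of_lt hy) (sub_nonneg.2 (sin_le (le_of_lt hy))))
  have := hmono self_mem_Ici hx hx
  simp only [f, sin_zero, cos_zero] at this
  linarith

theorem sin_sub_mul_cos_le_two_mul_sin_pow_three {x : ℝ} (h0 : 0 ≤ x)
    (h1 : x ≤ π / 2 + 1 / 4) : sin x - x * cos x ≤ 2 * sin x ^ 3 := by
  have hπ := pi_lt_d2
  rcases le_total x (π / 2) with hx | hx
  · -- Jordan's inequality `x ≤ (π / 2) sin x` and `(π / 2) ^ 3 ≤ 6`
    have hjordan : x ≤ π / 2 * sin x := by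
      have := mul_le_sin h0 hx
      rw [div_mul_eq_mul_div, div_le_iff₀ pi_pos] at this
      linarith
    have hcube : x ^ 3 ≤ (π / 2) ^ 3 * sin x ^ 3 := by
      rw [← mul_pow]; exact pow_le_pow_left₀ h0 hjordan 3
    have hs : 0 ≤ sin x ^ 3 := pow_nonneg (sin_nonneg_of_nonneg_of_le_pi h0 (by linarith)) 3
    have hπ3 : (π / 2) ^ 3 ≤ 6 :=
      (pow_le_pow_left₀ (by positivity) (by linarith : π / 2 ≤ 1.575) 3).trans (by norm_num)
    nlinarith [sin_sub_mul_cos_le h0]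
  · set δ := x - π / 2 with hδ
    have hsin : sin x = cos δ := by rw [← sin_add_pi_div_two, hδ, sub_add_cancel]
    have hcos : cos x = -sin δ := by rw [← cos_add_pi_div_two, hδ, sub_add_cancel]
    have hδ0 : 0 ≤ δ := by linarith
    have hδ1 : δ ≤ 1 / 4 := by linarith
    have hc : 31 / 32 ≤ cos δ := by nlinarith [one_sub_sq_div_two_le_cos (x := δ)]
    have hs : sin δ ≤ 1 / 4 := (sin_le hδ0).trans hδ1
    have hs0 : 0 ≤ sin δ := sin_nonneg_of_nonneg_of_le_pi hδ0 (by linarith [pi_gt_three])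
    rw [hsin, hcos]
    nlinarith [mul_le_mul hs h1 (by linarith) (by linarith [pi_pos]),
      mul_nonneg (sub_nonneg.2 hc) (sub_nonneg.2 hc), cos_le_one δ]

theorem monotoneOn_div_sin : MonotoneOn (fun x => x / sin x) (Ioo 0 π) := by
  have hderiv : ∀ x ∈ Ioo 0 π,
      HasDerivAt (fun x => x / sin x) ((sin x - x * cos x) / sin x ^ 2) x := fun x hx =>
    ((hasDerivAt_id x).div (hasDerivAt_sin x) (sin_pos_of_pos_of_lt_pi hx.1 hx.2).ne').congr_deriv
      (by simp only [id, one_mul])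
  refine monotoneOn_of_hasDerivWithinAt_nonneg (convex_Ioo 0 π)
    (fun x hx => (hderiv x hx).continuousAt.continuousWithinAt)
    (fun x hx => (hderiv x (interior_subset hx)).hasDerivWithinAt) fun x hx => ?_
  rw [interior_Ioo] at hx
  exact div_nonneg (sub_nonneg.2 (mul_cos_le_sin hx.1.le hx.2.le)) (sq_nonneg _)

theorem monotoneOn_two_mul_one_sub_cos_sub_div_sin :
    MonotoneOn (fun x => 2 * (1 - cos x) - x / sin x) (Ioo 0 (π / 2 + 1 / 4)) := by
  have hπ := pi_gt_three
  have hderiv : ∀ x ∈ Ioo 0 (π / 2 + 1 / 4), HasDerivAt (fun x => 2 * (1 - cos x) - x / sin x)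
      (2 * sin x - (sin x - x * cos x) / sin x ^ 2) x := fun x hx =>
    (((hasDerivAt_cos x).const_sub 1).const_mul 2 |>.sub <|
      (hasDerivAt_id x).div (hasDerivAt_sin x)
        (sin_pos_of_pos_of_lt_pi hx.1 (by linarith [hx.2])).ne').congr_deriv
      (by simp only [id, one_mul]; ring)
  refine monotoneOn_of_hasDerivWithinAt_nonneg (convex_Ioo _ _)
    (fun x hx => (hderiv x hx).continuousAt.continuousWithinAt)
    (fun x hx => (hderiv x (interior_subset hx)).hasDerivWithinAt) fun x hx => ?_
  rw [interior_Ioo] at hx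
  have hsin : 0 < sin x := sin_pos_of_pos_of_lt_pi hx.1 (by linarith [hx.2])
  rw [sub_nonneg, div_le_iff₀ (by positivity)]
  linarith [sin_sub_mul_cos_le_two_mul_sin_pow_three hx.1.le hx.2.le]

theorem sin_sq_half (x : ℝ) : sin (x / 2) ^ 2 = (1 - cos x) / 2 := by
  rw [sin_sq_eq_half_sub, mul_div_cancel₀ x two_ne_zero]
  ring

theorem sin_sq_half_of_spherical_law_of_cosines {s t u w : ℝ}
    (hlaw : cos s = cos t * cos u + sin t * sin u * w) :
    sin (s / 2) ^ 2 =
      (1 + w) / 2 * sin ((u - t) / 2) ^ 2 + (1 - w) / 2 * sin ((u + t) / 2) ^ 2 := by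
  rw [sin_sq_half, sin_sq_half, sin_sq_half, hlaw, cos_sub, cos_add]
  ring

theorem sin_sq_half_add_sub_sin_sq_half_sub (t u : ℝ) :
    sin ((u + t) / 2) ^ 2 - sin ((u - t) / 2) ^ 2 = sin t * sin u := by
  rw [sin_sq_half, sin_sq_half, cos_sub, cos_add]
  ring

theorem sin_sq_le_sin_sq_of_abs_le {x y : ℝ} (h : |x| ≤ y) (hy : y ≤ π / 2) :
    sin x ^ 2 ≤ sin y ^ 2 := by
  have hπ := pi_pos
  rw [← sq_abs, abs_sin_eq_sin_abs_of_abs_le_pi (by linarith)]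
  exact pow_le_pow_left₀ (sin_nonneg_of_nonneg_of_le_pi (abs_nonneg x) (by linarith))
    (sin_le_sin_of_le_of_le_pi_div_two (by linarith [abs_nonneg x]) hy h) 2

theorem sin_mul_sin_sub_sq_le {t u : ℝ} (ht : 0 ≤ t) (hu0 : 0 ≤ u) (hu : u ≤ π) :
    sin t * sin u - t ^ 2 ≤ 2 * t * |sin ((u - t) / 2)| := by
  have hsin_t : sin t ≤ t := sin_le ht
  have hsin_u : 0 ≤ sin u := sin_nonneg_of_nonneg_of_le_pi hu0 hu
  have hdiff : sin u - sin t ≤ 2 * |sin ((u - t) / 2)| := by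
    rw [sin_sub_sin, mul_assoc]
    calc 2 * (sin ((u - t) / 2) * cos ((u + t) / 2))
        ≤ 2 * |sin ((u - t) / 2) * cos ((u + t) / 2)| := by gcongr; exact le_abs_self _
      _ ≤ 2 * |sin ((u - t) / 2)| := by
        rw [abs_mul]; gcongr; exact mul_le_of_le_one_right (abs_nonneg _) (abs_cos_le_one _)
  nlinarith [mul_le_mul_of_nonneg_left hdiff ht, mul_le_mul_of_nonneg_right hsin_t hsin_u,
    mul_le_mul_of_nonneg_left hsin_t ht]

end Real

theorem mul_one_sub_mul_sq_le {l D t q : ℝ} (hl : 0 ≤ l) (hD : 0 ≤ D)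
    (h : D - t ^ 2 ≤ 2 * t * |q|) :
    l * (1 - l) * D ^ 2 ≤ t ^ 2 * (q ^ 2 + l * D) := by
  rcases le_total D (t ^ 2) with hDt | hDt
  · nlinarith [mul_nonneg hl hD, sq_nonneg q, sq_nonneg t]
  · have hsq : (D - t ^ 2) ^ 2 ≤ (2 * t * |q|) ^ 2 := pow_le_pow_left₀ (by linarith) h 2
    rw [mul_pow, mul_pow, sq_abs] at hsq
    nlinarith [sq_nonneg ((D - t ^ 2) / 2 - l * D)]

noncomputable def arcsinSqrtSq (y : ℝ) : ℝ := arcsin √y ^ 2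

theorem arcsinSqrtSq_sin_sq {θ : ℝ} (h : |θ| ≤ π / 2) :
    arcsinSqrtSq (sin θ ^ 2) = θ ^ 2 := by
  rw [arcsinSqrtSq, sqrt_sq_eq_abs, abs_sin_eq_sin_abs_of_abs_le_pi (by linarith [pi_pos]),
    arcsin_sin (by linarith [abs_nonneg θ, pi_pos]) h, sq_abs]

theorem continuous_arcsinSqrtSq : Continuous arcsinSqrtSq := by
  unfold arcsinSqrtSq; fun_prop

theorem hasDerivAt_arcsinSqrtSq {y : ℝ} (h0 : 0 < y) (h1 : y < 1) :
    HasDerivAt arcsinSqrtSq (2 * arcsin √y / sin (2 * arcsin √y)) y := by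
  have hsqrt0 : 0 < √y := sqrt_pos.2 h0
  have hsqrt1 : √y < 1 := (sqrt_lt' one_pos).2 (by simpa using h1)
  have h := ((hasDerivAt_arcsin (by linarith) hsqrt1.ne).comp y (hasDerivAt_sqrt h0.ne')).pow 2
  refine h.congr_deriv ?_
  simp only [Function.comp_apply]
  rw [sin_two_mul, sin_arcsin (by linarith) hsqrt1.le, cos_arcsin, sq_sqrt h0.le]
  field_simp
  ring

theorem cos_two_mul_arcsin_sqrt {y : ℝ} (h0 : 0 ≤ y) (h1 : y ≤ 1) :
    cos (2 * arcsin √y) = 1 - 2 * y := by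
  rw [cos_two_mul, cos_arcsin, sq_sqrt h0, sq_sqrt (by linarith)]
  ring

theorem monotone_two_mul_arcsin_sqrt : Monotone fun y => 2 * arcsin √y :=
  (monotone_arcsin.comp fun _ _ h => sqrt_le_sqrt h).const_mul zero_le_two

theorem convexOn_arcsinSqrtSq : ConvexOn ℝ (Icc 0 1) arcsinSqrtSq := by
  refine MonotoneOn.convexOn_of_deriv (convex_Icc 0 1) continuous_arcsinSqrtSq.continuousOn
    (fun y hy => ?_) ?_
  · rw [interior_Icc] at hy
    exact (hasDerivAt_arcsinSqrtSq hy.1 hy.2).differentiableAt.differentiableWithinAt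
  rw [interior_Icc]
  have hmaps : MapsTo (fun y => 2 * arcsin √y) (Ioo 0 1) (Ioo 0 π) := fun y hy =>
    ⟨by have := arcsin_pos.2 (sqrt_pos.2 hy.1); linarith,
      by have := arcsin_lt_pi_div_two.2 ((sqrt_lt' one_pos).2 (by simpa using hy.2)); linarith⟩
  exact (monotoneOn_div_sin.comp (monotone_two_mul_arcsin_sqrt.monotoneOn _) hmaps).congr
    fun y hy => (hasDerivAt_arcsinSqrtSq hy.1 hy.2).deriv.symm

theorem convexOn_two_mul_sq_sub_arcsinSqrtSq :
    ConvexOn ℝ (Icc 0 (sin (π / 4 + 1 / 8) ^ 2)) fun y => 2 * y ^ 2 - arcsinSqrtSq y := by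
  have hπ := pi_gt_three
  set b := sin (π / 4 + 1 / 8) ^ 2
  have hb1 : b ≤ 1 := sin_sq_le_one _
  have hsqrt_b : √b = sin (π / 4 + 1 / 8) :=
    sqrt_sq (sin_nonneg_of_nonneg_of_le_pi (by linarith) (by linarith))
  have hderiv : ∀ y ∈ Ioo 0 b, HasDerivAt (fun y => 2 * y ^ 2 - arcsinSqrtSq y)
      (2 * (1 - cos (2 * arcsin √y)) - 2 * arcsin √y / sin (2 * arcsin √y)) y := fun y hy =>
    ((hasDerivAt_pow 2 y).const_mul 2 |>.sub <|
      hasDerivAt_arcsinSqrtSq hy.1 (by linarith [hy.2])).congr_deriv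
      (by rw [cos_two_mul_arcsin_sqrt hy.1.le (by linarith [hy.2])]; ring)
  refine MonotoneOn.convexOn_of_deriv (convex_Icc 0 b)
    ((continuous_const.mul (continuous_pow 2)).sub continuous_arcsinSqrtSq).continuousOn
    (fun y hy => ?_) ?_
  · rw [interior_Icc] at hy
    exact (hderiv y hy).differentiableAt.differentiableWithinAt
  rw [interior_Icc]
  have hmaps : MapsTo (fun y => 2 * arcsin √y) (Ioo 0 b) (Ioo 0 (π / 2 + 1 / 4)) := fun y hy =>
    ⟨by have := arcsin_pos.2 (sqrt_pos.2 hy.1); linarith, by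
      have hlt : √y < sin (π / 4 + 1 / 8) := hsqrt_b ▸ sqrt_lt_sqrt hy.1.le hy.2
      have := (arcsin_lt_iff_lt_sin
        ⟨by linarith [sqrt_nonneg y], by linarith [sin_le_one (π / 4 + 1 / 8)]⟩
        ⟨by linarith, by linarith⟩).2 hlt
      linarith⟩
  exact (monotoneOn_two_mul_one_sub_cos_sub_div_sin.comp
    (monotone_two_mul_arcsin_sqrt.monotoneOn _) hmaps).congr
    fun y hy => (hderiv y hy).deriv.symm

theorem sq_le_of_spherical_law_of_cosines {s t u w : ℝ} (ht : 0 ≤ t) (hu : 0 ≤ u)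
    (htu : t + u ≤ π) (hw : w ∈ Icc (-1) 1) (hs0 : 0 ≤ s) (hs : s ≤ π)
    (hlaw : cos s = cos t * cos u + sin t * sin u * w) :
    s ^ 2 ≤ t ^ 2 + u ^ 2 - 2 * t * u * w := by
  have jensen := convexOn_arcsinSqrtSq.2 ⟨sq_nonneg _, sin_sq_le_one ((u - t) / 2)⟩
    ⟨sq_nonneg _, sin_sq_le_one ((u + t) / 2)⟩ (by linarith [hw.1] : 0 ≤ (1 + w) / 2)
    (by linarith [hw.2] : 0 ≤ (1 - w) / 2) (by ring)
  simp only [smul_eq_mul] at jensen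
  rw [← sin_sq_half_of_spherical_law_of_cosines hlaw,
    arcsinSqrtSq_sin_sq (abs_le.2 ⟨by linarith, by linarith⟩),
    arcsinSqrtSq_sin_sq (abs_le.2 ⟨by linarith, by linarith⟩),
    arcsinSqrtSq_sin_sq (abs_le.2 ⟨by linarith, by linarith⟩)] at jensen
  linarith

theorem le_one_add_two_mul_sq_mul_sq_of_spherical_law_of_cosines {s t u w : ℝ} (ht0 : 0 ≤ t)
    (ht : t ≤ 1 / 4) (hu0 : 0 ≤ u) (hu : u ≤ π / 2) (hw : w ∈ Icc (-1) 1) (hs0 : 0 ≤ s)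
    (hs : s ≤ π) (hlaw : cos s = cos t * cos u + sin t * sin u * w) :
    t ^ 2 + u ^ 2 - 2 * t * u * w ≤ (1 + 2 * t ^ 2) * s ^ 2 := by
  have hπ := pi_gt_three
  set Y₀ := sin ((u - t) / 2) ^ 2
  set Y₁ := sin ((u + t) / 2) ^ 2
  set l := (1 - w) / 2 with hl
  have hY : sin (s / 2) ^ 2 = (1 - l) * Y₀ + l * Y₁ := by
    rw [sin_sq_half_of_spherical_law_of_cosines hlaw]; ring
  have hY₁₀ : Y₁ - Y₀ = sin t * sin u := sin_sq_half_add_sub_sin_sq_half_sub t u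
  have hY₀ : Y₀ ∈ Icc 0 (sin (π / 4 + 1 / 8) ^ 2) :=
    ⟨sq_nonneg _,
      sin_sq_le_sin_sq_of_abs_le (abs_le.2 ⟨by linarith, by linarith⟩) (by linarith)⟩
  have hY₁ : Y₁ ∈ Icc 0 (sin (π / 4 + 1 / 8) ^ 2) :=
    ⟨sq_nonneg _,
      sin_sq_le_sin_sq_of_abs_le (abs_le.2 ⟨by linarith, by linarith⟩) (by linarith)⟩
  have jensen := convexOn_two_mul_sq_sub_arcsinSqrtSq.2 hY₀ hY₁
    (by linarith [hw.1] : 0 ≤ 1 - l) (by linarith [hw.2] : 0 ≤ l) (by ring)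
  simp only [smul_eq_mul] at jensen
  rw [← hY, arcsinSqrtSq_sin_sq (abs_le.2 ⟨by linarith, by linarith⟩),
    arcsinSqrtSq_sin_sq (abs_le.2 ⟨by linarith, by linarith⟩),
    arcsinSqrtSq_sin_sq (abs_le.2 ⟨by linarith, by linarith⟩)] at jensen
  have hvariance : (1 - l) * Y₀ ^ 2 + l * Y₁ ^ 2 - (sin (s / 2) ^ 2) ^ 2 =
      l * (1 - l) * (Y₁ - Y₀) ^ 2 := by
    rw [hY]; ring
  have hcross : l * (1 - l) * (Y₁ - Y₀) ^ 2 ≤ t ^ 2 * sin (s / 2) ^ 2 := by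
    have hD : 0 ≤ sin t * sin u := mul_nonneg (sin_nonneg_of_nonneg_of_le_pi ht0 (by linarith))
      (sin_nonneg_of_nonneg_of_le_pi hu0 (by linarith))
    have := mul_one_sub_mul_sq_le (by linarith [hw.2] : 0 ≤ l) hD
      (sin_mul_sin_sub_sq_le ht0 hu0 (by linarith))
    rw [hY₁₀, hY]
    linear_combination this - t ^ 2 * l * hY₁₀
  have hsin_half : sin (s / 2) ^ 2 ≤ (s / 2) ^ 2 :=
    pow_le_pow_left₀ (sin_nonneg_of_nonneg_of_le_pi (by linarith) (by linarith))
      (sin_le (by linarith)) 2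
  nlinarith [mul_le_mul_of_nonneg_left hsin_half (sq_nonneg t)]

theorem spherical_distortion_curvature_K_general
    (K a b c A : ℝ) (hK : 0 < K)
    (hb : b ∈ Set.Icc (0 : ℝ) (1 / (4 * Real.sqrt K)))
    (hc : c ∈ Set.Icc (0 : ℝ) (Real.pi / (2 * Real.sqrt K)))
    (ha : a ∈ Set.Icc (0 : ℝ) (Real.pi / Real.sqrt K))
    (hlaw : Real.cos (Real.sqrt K * a)
        = Real.cos (Real.sqrt K * b) * Real.cos (Real.sqrt K * c)
          + Real.sin (Real.sqrt K * b) * Real.sin (Real.sqrt K * c)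
              * Real.cos A)
    (abar : ℝ)
    (habar2 : abar ^ 2 = b ^ 2 + c ^ 2 - 2 * b * c * Real.cos A) :
    a ^ 2 ≤ abar ^ 2 ∧ abar ^ 2 ≤ (1 + 2 * K * b ^ 2) * a ^ 2 := by
  have hπ := pi_gt_three
  have hk : 0 < √K := sqrt_pos.2 hK
  have hk2 : √K ^ 2 = K := sq_sqrt hK.le
  have hb' := (le_div_iff₀ (by positivity)).1 hb.2
  have hc' := (le_div_iff₀ (by positivity)).1 hc.2
  have ha' := (le_div_iff₀ hk).1 ha.2
  have hcosA : cos A ∈ Icc (-1) 1 := ⟨neg_one_le_cos A, cos_le_one A⟩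
  have lower := sq_le_of_spherical_law_of_cosines (mul_nonneg hk.le hb.1) (mul_nonneg hk.le hc.1)
    (by linarith) hcosA (mul_nonneg hk.le ha.1) (by linarith) hlaw
  have upper := le_one_add_two_mul_sq_mul_sq_of_spherical_law_of_cosines (mul_nonneg hk.le hb.1)
    (by linarith) (mul_nonneg hk.le hc.1) (by linarith) hcosA (mul_nonneg hk.le ha.1)
    (by linarith) hlaw
  have euclid :
      (√K * b) ^ 2 + (√K * c) ^ 2 - 2 * (√K * b) * (√K * c) * cos A = K * abar ^ 2 := by
    rw [habar2]; linear_combination (b ^ 2 + c ^ 2 - 2 * b * c * cos A) * hk2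
  rw [euclid] at lower upper
  simp only [mul_pow, hk2] at lower upper
  exact ⟨le_of_mul_le_mul_left lower hK,
    le_of_mul_le_mul_left (by linarith) hK⟩

theorem spherical_distortion_curvature_K
    (K a b c A : ℝ) (hK : 0 < K)
    (hb : b ∈ Set.Icc (0 : ℝ) (1 / (4 * Real.sqrt K)))
    (hc : c ∈ Set.Icc (0 : ℝ) (Real.pi / (2 * Real.sqrt K)))
    (hA : A ∈ Set.Icc (0 : ℝ) Real.pi)
    (ha : a ∈ Set.Icc (0 : ℝ) (Real.pi / Real.sqrt K))
    (hlaw : Real.cos (Real.sqrt K * a)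
        = Real.cos (Real.sqrt K * b) * Real.cos (Real.sqrt K * c)
          + Real.sin (Real.sqrt K * b) * Real.sin (Real.sqrt K * c)
              * Real.cos A)
    (abar : ℝ) (habar : 0 ≤ abar)
    (habar2 : abar ^ 2 = b ^ 2 + c ^ 2 - 2 * b * c * Real.cos A) :
    a ^ 2 ≤ abar ^ 2 ∧ abar ^ 2 ≤ (1 + 2 * K * b ^ 2) * a ^ 2 :=
  spherical_distortion_curvature_K_general K a b c A hK hb hc ha hlaw abar habar2
end
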